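/- For (a_2,...,a_n) ≠ (0,...,0), let μ_1(a_2,...,a_n) be the n-dimensional algebra with basis x_1,...,x_n, [x_i,x_1] = x_{i+1} for 1 ≤ i ≤ n-1, and [x_n,x_1] = Σ_{k=2}^n a_k x_k (all other products zero). Then μ_1(a_2,...,a_n) is a Leibniz algebra, and it is single-generated (generated by x_1). -/
import Mathlib


variable (K : Type*) [Field K] [CharZero K]

/-- The bracket of the null-filiform Leibniz algebra `NF^n` in the (zero-indexed)
basis `x_{i+1} = Pi.single i 1`: `[x_i, x_1] = x_{i+1}`, all other products of
basis vectors zero. -/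
def nfF (n : ℕ) (u v : Fin n → K) : Fin n → K :=
  fun k => if h : 0 < (k : ℕ) then
    v ⟨0, k.pos⟩ * u ⟨(k : ℕ) - 1, lt_of_le_of_lt (Nat.sub_le _ _) k.isLt⟩
  else 0

/-- The bracket of `NF^n` as a bilinear map. -/
noncomputable def nfb (n : ℕ) :
    (Fin n → K) →ₗ[K] (Fin n → K) →ₗ[K] (Fin n → K) :=
  LinearMap.mk₂ K (nfF K n)
    (fun u u' v => by funext k; simp only [nfF, Pi.add_apply]; split_ifs <;> ring)
    (fun c u v => by
      funext k; simp only [nfF, Pi.smul_apply, smul_eq_mul]; split_ifs <;> ring)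
    (fun u v v' => by funext k; simp only [nfF, Pi.add_apply]; split_ifs <;> ring)
    (fun c u v => by
      funext k; simp only [nfF, Pi.smul_apply, smul_eq_mul]; split_ifs <;> ring)

/-- The bracket of the algebra `μ₁(a_2, …, a_n)` in the zero-indexed basis
`x_{i+1} = Pi.single i 1`: `[x_i, x_1] = x_{i+1}` for `1 ≤ i ≤ n-1` and
`[x_n, x_1] = ∑_{k=2}^n a_k x_k` (here `a l` is the paper's `a_{l+1}`; only the
values `a l` for `l ≥ 1` occur). -/
def muF (n : ℕ) (a : Fin n → K) (u v : Fin n → K) : Fin n → K :=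
  fun k => if h : 0 < (k : ℕ) then
    v ⟨0, k.pos⟩ * (u ⟨(k : ℕ) - 1, lt_of_le_of_lt (Nat.sub_le _ _) k.isLt⟩
      + u ⟨n - 1, Nat.sub_lt k.pos Nat.one_pos⟩ * a k)
  else 0

/-- for `(a_2, …, a_n) ≠ 0`, the algebra `μ₁(a_2, …, a_n)` is a Leibniz
algebra, and it is single-generated (generated by `x_1`). -/
theorem mu_is_leibniz_and_single_generated (n : ℕ) (hn : 2 ≤ n) (a : Fin n → K)
    (h0 : a ⟨0, by omega⟩ = 0) (ha : a ≠ 0) :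
    (∀ x y z : Fin n → K,
      muF K n a x (muF K n a y z)
        = muF K n a (muF K n a x y) z - muF K n a (muF K n a x z) y) ∧
    (∀ p : Submodule K (Fin n → K),
      Pi.single (⟨0, by omega⟩ : Fin n) (1 : K) ∈ p →
      (∀ u ∈ p, ∀ v ∈ p, muF K n a u v ∈ p) → p = ⊤) := by
  constructor
  · intro x y z
    funext k
    by_cases hk : 0 < (k : ℕ)
    · simp only [muF, dif_pos hk]
      have hn1 : 0 < n - 1 := by omega
      by_cases hk1 : 0 < (k : ℕ) - 1
      · simp only [muF, dif_pos hn1, dif_pos hk1, dif_neg (lt_irrefl 0), Pi.sub_apply]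
        ring
      · simp only [muF, dif_pos hn1, dif_neg hk1, dif_neg (lt_irrefl 0), Pi.sub_apply]
        ring
    · simp only [muF, dif_neg hk, Pi.sub_apply]; ring
  · intro p h1 hcl
    have key : ∀ m, ∀ hm : m < n, Pi.single (⟨m, hm⟩ : Fin n) (1 : K) ∈ p := by
      intro m
      induction m with
      | zero => intro hm; exact h1
      | succ m ih =>
        intro hm
        have hm' : m < n := by omega
        have hmem := hcl _ (ih hm') _ h1
        have heq : muF K n a (Pi.single (⟨m, hm'⟩ : Fin n) 1)
            (Pi.single (⟨0, by omega⟩ : Fin n) 1)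
            = Pi.single (⟨m + 1, hm⟩ : Fin n) (1 : K) := by
          funext k
          by_cases hk : 0 < (k : ℕ)
          · simp only [muF, dif_pos hk, Pi.single_apply, Fin.ext_iff]
            rw [if_pos trivial, if_neg (by omega : ¬ n - 1 = m)]
            by_cases hkm : (k : ℕ) = m + 1
            · rw [if_pos hkm, if_pos (by omega)]; ring
            · rw [if_neg hkm, if_neg (by omega)]; ring
          · simp only [muF, dif_neg hk, Pi.single_apply, Fin.ext_iff]
            rw [if_neg (by omega)]
        rw [heq] at hmem
        exact hmem
    rw [Submodule.eq_top_iff']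
    intro v
    have hv : v = ∑ i : Fin n, v i • (Pi.single i 1 : Fin n → K) := by
      funext j
      simp [Pi.single_apply]
    rw [hv]
    exact Submodule.sum_mem _ fun i _ =>
      Submodule.smul_mem _ _ (key i.val i.isLt)
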